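/- Let f : X → ℝ be continuous, let V be a calibrated subaction for f, and let μ be a maximizing measure for f. Then β(f) + V(σ(x)) − V(x) − f(x) = 0 for every x in the support of μ. -/

import Mathlib

open MeasureTheory Filter Topology Set ENNReal

noncomputable section

namespace GXY

variable {M : Type*}

/-- The shift map on the sequence space `ℕ → M`. -/
def shift (x : ℕ → M) : ℕ → M := fun n => x (n + 1)

/-- Prepending a symbol `a` to a sequence `x`. -/
def cons (a : M) (x : ℕ → M) : ℕ → M := fun n => Nat.casesOn n a x

/-- The metric `d(x,y) = ∑ θ^n d_M(x_n, y_n)` on `ℕ → M`. -/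
def D [MetricSpace M] (θ : ℝ) (x y : ℕ → M) : ℝ := ∑' n, θ ^ n * dist (x n) (y n)

/-- Hölder continuity with respect to the metric `D θ`. -/
def IsHolder [MetricSpace M] (θ : ℝ) (f : (ℕ → M) → ℝ) : Prop :=
  ∃ C > (0 : ℝ), ∃ α ∈ Set.Ioc (0 : ℝ) 1, ∀ x y, |f x - f y| ≤ C * (D θ x y) ^ α

/-- Shift-invariant Borel probability measures on `ℕ → M`. -/
def IsInvProb [MetricSpace M] [MeasurableSpace M] (μ : Measure (ℕ → M)) : Prop :=
  IsProbabilityMeasure μ ∧ μ.map shift = μ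

/-- The maximal ergodic average `β(f)`. -/
def betaF [MetricSpace M] [MeasurableSpace M] (f : (ℕ → M) → ℝ) : ℝ :=
  sSup { r | ∃ μ : Measure (ℕ → M), IsInvProb μ ∧ r = ∫ x, f x ∂μ }

/-- A maximizing measure for `f`. -/
def IsMaximizing [MetricSpace M] [MeasurableSpace M] (f : (ℕ → M) → ℝ)
    (μ : Measure (ℕ → M)) : Prop :=
  IsInvProb μ ∧ ∫ x, f x ∂μ = betaF f

/-- A calibrated subaction `V` for `f`:
`V y = max_{σ x = y} (f x + V x - β f)` for every `y`. -/
def IsCalibrated [MetricSpace M] [MeasurableSpace M] (f V : (ℕ → M) → ℝ) : Prop :=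
  Continuous V ∧
    ∀ y, IsGreatest { t | ∃ x, shift x = y ∧ t = f x + V x - betaF f } (V y)

/-- The Ruelle transfer operator `(L_g w)(x) = ∫_M e^{g(ax)} w(ax) dm(a)`. -/
def Ruelle [MetricSpace M] [MeasurableSpace M] (m : Measure M) (g w : (ℕ → M) → ℝ) :
    (ℕ → M) → ℝ :=
  fun x => ∫ a, Real.exp (g (cons a x)) * w (cons a x) ∂m

/-- `R₊ = β(f) + V ∘ σ - V - f ≥ 0`. -/
def Rplus [MetricSpace M] [MeasurableSpace M] (f V : (ℕ → M) → ℝ) (x : ℕ → M) : ℝ :=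
  betaF f + V (shift x) - V x - f x

/-- `R₊^∞(z) = ∑_{j≥0} R₊(σ^j z) ∈ [0,∞]`. -/
def RplusInf [MetricSpace M] [MeasurableSpace M] (f V : (ℕ → M) → ℝ) (z : ℕ → M) : ℝ≥0∞ :=
  ∑' j : ℕ, ENNReal.ofReal (Rplus f V (shift^[j] z))

/-- `R₋ = f + V - V ∘ σ - β(f) ≤ 0`. -/
def Rminus [MetricSpace M] [MeasurableSpace M] (f V : (ℕ → M) → ℝ) (x : ℕ → M) : ℝ :=
  f x + V x - V (shift x) - betaF f

/-- The Birkhoff sum `R₋^k = ∑_{j<k} R₋ ∘ σ^j`. -/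
def RminusBirk [MetricSpace M] [MeasurableSpace M] (f V : (ℕ → M) → ℝ) (k : ℕ)
    (z : ℕ → M) : ℝ :=
  ∑ j ∈ Finset.range k, Rminus f V (shift^[j] z)

/-- Extended-real logarithm with the convention `log 0 = -∞`. -/
def elog (t : ℝ) : EReal := if t = 0 then ⊥ else ((Real.log t : ℝ) : EReal)


/-! Calibration makes `R₊ = β(f) + V ∘ σ - V - f` a nonnegative continuous function. For an
invariant `μ` the coboundary `V ∘ σ - V` has zero integral, so `∫ R₊ dμ = β(f) - ∫ f dμ`, which
vanishes when `μ` is maximizing. Hence `R₊ = 0` `μ`-a.e., and by continuity on all of `supp μ`. -/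

lemma _root_.Continuous.integrable_of_compactSpace {X : Type*} [TopologicalSpace X]
    [CompactSpace X] [MeasurableSpace X] [OpensMeasurableSpace X] {μ : Measure X}
    [IsFiniteMeasure μ] {g : X → ℝ} (hg : Continuous g) : Integrable g μ :=
  hg.integrable_of_hasCompactSupport (HasCompactSupport.of_compactSpace g)

lemma continuous_shift [TopologicalSpace M] : Continuous (shift : (ℕ → M) → ℕ → M) :=
  continuous_pi fun n => continuous_apply (n + 1)

lemma measurable_shift [MeasurableSpace M] : Measurable (shift : (ℕ → M) → ℕ → M) :=
  measurable_pi_lambda _ fun n => measurable_pi_apply (n + 1)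

section Measures

variable [MetricSpace M] [MeasurableSpace M] {μ : Measure (ℕ → M)} {f V : (ℕ → M) → ℝ}

lemma IsInvProb.integral_comp_shift (hμ : IsInvProb μ) {φ : (ℕ → M) → ℝ}
    (hφ : AEStronglyMeasurable φ μ) : ∫ x, φ (shift x) ∂μ = ∫ x, φ x ∂μ := by
  have hφ' : AEStronglyMeasurable φ (μ.map shift) := by rwa [hμ.2]
  rw [← integral_map measurable_shift.aemeasurable hφ', hμ.2]

lemma IsCalibrated.rplus_nonneg (hV : IsCalibrated f V) (x : ℕ → M) : 0 ≤ Rplus f V x := by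
  have := (hV.2 (shift x)).2 ⟨x, rfl, rfl⟩
  unfold Rplus
  linarith

lemma IsCalibrated.continuous_rplus (hf : Continuous f) (hV : IsCalibrated f V) :
    Continuous (Rplus f V) :=
  ((continuous_const.add (hV.1.comp continuous_shift)).sub hV.1).sub hf

variable [CompactSpace M] [BorelSpace M]

lemma IsMaximizing.integral_rplus_eq_zero (hμ : IsMaximizing f μ) (hf : Continuous f)
    (hV : IsCalibrated f V) : ∫ x, Rplus f V x ∂μ = 0 := by
  obtain ⟨hinv, hmax⟩ := hμ
  have : IsProbabilityMeasure μ := hinv.1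
  have hVσ : Integrable (fun x => V (shift x)) μ :=
    (hV.1.comp continuous_shift).integrable_of_compactSpace
  have hβVσ : Integrable (fun x => betaF f + V (shift x)) μ := (integrable_const _).add hVσ
  have hβVσV : Integrable (fun x => betaF f + V (shift x) - V x) μ :=
    hβVσ.sub hV.1.integrable_of_compactSpace
  unfold Rplus
  rw [integral_sub hβVσV hf.integrable_of_compactSpace,
    integral_sub hβVσ hV.1.integrable_of_compactSpace, integral_add (integrable_const _) hVσ,
    hinv.integral_comp_shift hV.1.aestronglyMeasurable, hmax, integral_const]
  simp

lemma IsMaximizing.rplus_ae_eq_zero (hμ : IsMaximizing f μ) (hf : Continuous f)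
    (hV : IsCalibrated f V) : Rplus f V =ᵐ[μ] 0 := by
  have : IsProbabilityMeasure μ := hμ.1.1
  exact (integral_eq_zero_iff_of_nonneg hV.rplus_nonneg
    (hV.continuous_rplus hf).integrable_of_compactSpace).mp (hμ.integral_rplus_eq_zero hf hV)

end Measures

theorem subaction_equation_on_support_of_maximizing_measure_general
    [MetricSpace M] [CompactSpace M] [MeasurableSpace M] [BorelSpace M]
    (f V : (ℕ → M) → ℝ) (hf : Continuous f) (hV : IsCalibrated f V)
    (μ : Measure (ℕ → M)) (hμ : IsMaximizing f μ) :
    ∀ x : ℕ → M, (∀ U : Set (ℕ → M), IsOpen U → x ∈ U → 0 < μ U) →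
      betaF f + V (shift x) - V x - f x = 0 := by
  intro x hx
  have hx_supp : x ∈ μ.support := by
    rw [Measure.support_eq_forall_isOpen]
    exact fun U hxU hU => hx U hU hxU
  exact Measure.support_subset_of_isClosed
    (isClosed_eq (hV.continuous_rplus hf) continuous_const) (hμ.rplus_ae_eq_zero hf hV) hx_supp

theorem subaction_equation_on_support_of_maximizing_measure
    [MetricSpace M] [CompactSpace M] [ConnectedSpace M] [MeasurableSpace M] [BorelSpace M]
    (hdiam : ∀ a b : M, dist a b ≤ 1)
    (θ : ℝ) (hθ : θ ∈ Set.Ioo (0 : ℝ) 1)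
    (f V : (ℕ → M) → ℝ) (hf : Continuous f) (hV : IsCalibrated f V)
    (μ : Measure (ℕ → M)) (hμ : IsMaximizing f μ) :
    ∀ x : ℕ → M, (∀ U : Set (ℕ → M), IsOpen U → x ∈ U → 0 < μ U) →
      betaF f + V (shift x) - V x - f x = 0 :=
  subaction_equation_on_support_of_maximizing_measure_general f V hf hV μ hμ

end GXY
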